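/- Let W, B be nonnegative random variables and Ĵ exponentially distributed with rate ν > 0, all three mutually independent, let a > 0 and c ∈ (0,1), and write Z(y) = E[exp(−y·W)], φ_B(y) = E[exp(−y·B)], c̄ = 1 − c. Then for every real s ≥ 0, E[exp(−s·(a·W + B − max(c·B − Ĵ, 0)))] = (ν/(ν + s))·Z(a·s)·φ_B(s·c̄) + (s/(ν + s))·Z(a·s)·φ_B(s + ν·c). -/

import Mathlib

/-!
The factor `exp (-(a s) W)` splits off by independence of `W` and `(B, J)`, so everything rests
on the conditional transform given `B = b`. There `J` enters only through `(d - J)⁺` with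
`d = c b`, and splitting the exponential density at `d` gives
`E[exp (s (d - J)⁺)] = P(J > d) + ∫₀ᵈ ν e^{-νx} e^{s(d-x)} dx`
`                   = (ν e^{sd} + s e^{-νd}) / (ν + s)`.
Multiplying by `e^{-sb}` yields the two exponentials in `b` that integrate to the transforms of `B`.
-/

open MeasureTheory ProbabilityTheory Real Set

lemma integral_exp_mul {r : ℝ} (hr : r ≠ 0) (a b : ℝ) :
    ∫ x in a..b, exp (r * x) = (exp (r * b) - exp (r * a)) / r := by
  rw [intervalIntegral.integral_comp_mul_left (fun x => exp x) hr, integral_exp, smul_eq_mul,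
    inv_mul_eq_div]

lemma ae_nonneg_expMeasure (ν : ℝ) : ∀ᵐ x ∂expMeasure ν, 0 ≤ x := by
  have h : expMeasure ν (Iio 0) = 0 := by
    rw [expMeasure, gammaMeasure, withDensity_apply _ measurableSet_Iio]
    exact lintegral_gammaPDF_of_nonpos le_rfl
  exact (measure_eq_zero_iff_ae_notMem.1 h).mono fun x hx => not_lt.1 hx

lemma integral_expMeasure {ν : ℝ} (hν : 0 < ν) (f : ℝ → ℝ) :
    ∫ x, f x ∂expMeasure ν = ∫ x in Ioi 0, ν * exp (-(ν * x)) * f x := by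
  rw [show expMeasure ν = volume.withDensity (exponentialPDF ν) from rfl,
    integral_withDensity_eq_integral_toReal_smul (f := exponentialPDF ν)
      (measurable_exponentialPDFReal ν).ennreal_ofReal
      (ae_of_all _ fun _ => ENNReal.ofReal_lt_top),
    ← integral_Ici_eq_integral_Ioi, ← setIntegral_eq_integral_of_forall_compl_eq_zero
      (s := Ici 0) fun x hx => by simp [exponentialPDF_of_neg (not_le.1 hx)]]
  refine setIntegral_congr_fun measurableSet_Ici fun x hx => ?_
  rw [exponentialPDF_of_nonneg hx, ENNReal.toReal_ofReal (by positivity), smul_eq_mul]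

lemma integral_exp_mul_max_sub_expMeasure {ν s d : ℝ} (hν : 0 < ν) (hνs : ν + s ≠ 0)
    (hd : 0 ≤ d) :
    ∫ x, exp (s * max (d - x) 0) ∂expMeasure ν
      = (ν * exp (s * d) + s * exp (-(ν * d))) / (ν + s) := by
  set f := fun x => ν * exp (-(ν * x)) * exp (s * max (d - x) 0)
  have hIoc : EqOn f (fun x => ν * exp (s * d) * exp (-(ν + s) * x)) (Ioc 0 d) := by
    intro x hx
    simp only [f, max_eq_left (sub_nonneg.2 hx.2), mul_assoc, ← exp_add]
    ring_nf
  have hIoi : EqOn f (fun x => ν * exp (-ν * x)) (Ioi d) := by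
    intro x hx
    simp only [f, max_eq_right (sub_nonpos.2 (mem_Ioi.1 hx).le), mul_zero, exp_zero,
      mul_one, neg_mul]
  have hf_Ioc : IntegrableOn f (Ioc 0 d) := by
    rw [integrableOn_congr_fun hIoc measurableSet_Ioc]
    exact Continuous.integrableOn_Ioc (by fun_prop)
  have hf_Ioi : IntegrableOn f (Ioi d) := by
    rw [integrableOn_congr_fun hIoi measurableSet_Ioi]
    exact (exp_neg_integrableOn_Ioi d hν).const_mul ν
  have hexp : exp (s * d) * exp (-(ν + s) * d) = exp (-(ν * d)) := by
    rw [← exp_add]; ring_nf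
  rw [integral_expMeasure hν, ← Ioc_union_Ioi_eq_Ioi hd,
    setIntegral_union (Ioc_disjoint_Ioi le_rfl) measurableSet_Ioi hf_Ioc hf_Ioi,
    setIntegral_congr_fun measurableSet_Ioc hIoc, setIntegral_congr_fun measurableSet_Ioi hIoi,
    integral_const_mul, integral_const_mul, ← intervalIntegral.integral_of_le hd,
    integral_exp_mul (neg_ne_zero.2 hνs), integral_exp_mul_Ioi (by linarith)]
  simp only [mul_zero, exp_zero, neg_mul] at hexp ⊢
  rw [← hexp]
  field_simp
  ring

lemma integral_exp_neg_mul_sub_max_expMeasure {ν s c b : ℝ} (hν : 0 < ν) (hνs : ν + s ≠ 0)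
    (hcb : 0 ≤ c * b) :
    ∫ j, exp (-s * (b - max (c * b - j) 0)) ∂expMeasure ν
      = ν / (ν + s) * exp (-(s * (1 - c)) * b) + s / (ν + s) * exp (-(s + ν * c) * b) := by
  have hsplit : ∀ j, exp (-s * (b - max (c * b - j) 0))
      = exp (-s * b) * exp (s * max (c * b - j) 0) := fun j => by
    rw [← exp_add]; ring_nf
  simp_rw [hsplit]
  rw [integral_const_mul, integral_exp_mul_max_sub_expMeasure hν hνs hcb, mul_div_assoc',
    mul_add, add_div, mul_left_comm, mul_left_comm (exp _) s, ← exp_add, ← exp_add]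
  ring_nf

section

variable {Ω : Type*} [MeasurableSpace Ω] {P : Measure Ω} [IsFiniteMeasure P]

lemma integrable_exp_neg_mul {X : Ω → ℝ} (hX : AEMeasurable X P)
    (hX0 : ∀ᵐ ω ∂P, 0 ≤ X ω) {t : ℝ} (ht : 0 ≤ t) :
    Integrable (fun ω => exp (-t * X ω)) P := by
  refine .of_bound (hX.const_mul (-t)).exp.aestronglyMeasurable 1 (hX0.mono fun ω hω => ?_)
  rw [norm_of_nonneg (exp_nonneg _), exp_le_one_iff, neg_mul, neg_nonpos]
  exact mul_nonneg ht hω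

lemma ProbabilityTheory.IndepFun.integral_comp_eq_integral_integral {α β E : Type*}
    [MeasurableSpace α] [MeasurableSpace β] [NormedAddCommGroup E] [NormedSpace ℝ E]
    {X : Ω → α} {Y : Ω → β}
    (hXY : IndepFun X Y P) (hX : AEMeasurable X P) (hY : AEMeasurable Y P) {g : α × β → E}
    (hg : StronglyMeasurable g) (hint : Integrable (fun ω => g (X ω, Y ω)) P) :
    ∫ ω, g (X ω, Y ω) ∂P = ∫ ω, ∫ y, g (X ω, y) ∂(P.map Y) ∂P := by
  have hXY' : AEMeasurable (fun ω => (X ω, Y ω)) P := hX.prodMk hY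
  have hmap : P.map (fun ω => (X ω, Y ω)) = (P.map X).prod (P.map Y) :=
    (indepFun_iff_map_prod_eq_prod_map_map hX hY).1 hXY
  have hint' : Integrable g ((P.map X).prod (P.map Y)) :=
    hmap ▸ (integrable_map_measure hg.aestronglyMeasurable hXY').2 hint
  rw [← integral_map hXY' hg.aestronglyMeasurable, hmap, integral_prod g hint',
    integral_map hX hg.integral_prod_right'.aestronglyMeasurable]

lemma integral_exp_neg_mul_sub_max_of_indepFun {B J : Ω → ℝ} (hBm : Measurable B)
    (hJm : Measurable J) (hB : ∀ ω, 0 ≤ B ω) (hBJ : IndepFun B J P) {ν : ℝ} (hν : 0 < ν)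
    (hJ : P.map J = expMeasure ν) {s c : ℝ} (hs : 0 ≤ s) (hc0 : 0 ≤ c) (hc1 : c ≤ 1) :
    ∫ ω, exp (-s * (B ω - max (c * B ω - J ω) 0)) ∂P
      = ν / (ν + s) * ∫ ω, exp (-(s * (1 - c)) * B ω) ∂P
        + s / (ν + s) * ∫ ω, exp (-(s + ν * c) * B ω) ∂P := by
  have hJ0 : ∀ᵐ ω ∂P, 0 ≤ J ω :=
    ae_of_ae_map hJm.aemeasurable (hJ ▸ ae_nonneg_expMeasure ν)
  have hint : Integrable (fun ω => exp (-s * (B ω - max (c * B ω - J ω) 0))) P :=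
    integrable_exp_neg_mul (by fun_prop) (hJ0.mono fun ω hω => sub_nonneg.2
      (max_le (by linarith [mul_le_of_le_one_left (hB ω) hc1]) (hB ω))) hs
  rw [hBJ.integral_comp_eq_integral_integral
    (g := fun p => exp (-s * (p.1 - max (c * p.1 - p.2) 0)))
    hBm.aemeasurable hJm.aemeasurable (by fun_prop) hint, hJ]
  have hinner : ∀ ω, ∫ j, exp (-s * (B ω - max (c * B ω - j) 0)) ∂expMeasure ν
      = ν / (ν + s) * exp (-(s * (1 - c)) * B ω) + s / (ν + s) * exp (-(s + ν * c) * B ω) :=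
    fun ω => integral_exp_neg_mul_sub_max_expMeasure hν (by linarith) (mul_nonneg hc0 (hB ω))
  simp only [hinner]
  rw [integral_add, integral_const_mul, integral_const_mul]
  · exact (integrable_exp_neg_mul hBm.aemeasurable (ae_of_all _ hB)
      (mul_nonneg hs (sub_nonneg.2 hc1))).const_mul _
  · exact (integrable_exp_neg_mul hBm.aemeasurable (ae_of_all _ hB) (by positivity)).const_mul _

end

theorem lst_proportional_with_subtracting_delay_general
    {Ω : Type*} [MeasurableSpace Ω] (P : Measure Ω) [IsProbabilityMeasure P]
    (W B J : Ω → ℝ)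
    (hWm : Measurable W) (hBm : Measurable B) (hJm : Measurable J)
    (hBnonneg : ∀ ω, 0 ≤ B ω)
    (ν : ℝ) (hν : 0 < ν)
    (hJlaw : Measure.map J P = expMeasure ν)
    (hindep : iIndepFun ![W, B, J] P)
    (a : ℝ) (c : ℝ) (hc : c ∈ Set.Ioo (0 : ℝ) 1)
    (s : ℝ) (hs : 0 ≤ s) :
    ∫ ω, Real.exp (-s * (a * W ω + B ω - max (c * B ω - J ω) 0)) ∂P
      = (ν / (ν + s)) * (∫ ω, Real.exp (-(a * s) * W ω) ∂P)
          * (∫ ω, Real.exp (-(s * (1 - c)) * B ω) ∂P)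
        + (s / (ν + s)) * (∫ ω, Real.exp (-(a * s) * W ω) ∂P)
          * (∫ ω, Real.exp (-(s + ν * c) * B ω) ∂P) := by
  have hmeas : ∀ i, Measurable (![W, B, J] i) := fun i => by fin_cases i <;> assumption
  have hW_BJ : IndepFun W (fun ω => (B ω, J ω)) P := by
    simpa using (hindep.indepFun_prodMk hmeas 1 2 0 (by decide) (by decide)).symm
  have hBJ : IndepFun B J P := by simpa using hindep.indepFun (i := 1) (j := 2) (by decide)
  have hsplit : ∀ ω, exp (-s * (a * W ω + B ω - max (c * B ω - J ω) 0))
      = exp (-(a * s) * W ω) * exp (-s * (B ω - max (c * B ω - J ω) 0)) := fun ω => by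
    rw [← exp_add]; ring_nf
  simp_rw [hsplit]
  rw [hW_BJ.integral_fun_comp_mul_comp (f := fun w => exp (-(a * s) * w))
    (g := fun p => exp (-s * (p.1 - max (c * p.1 - p.2) 0))) hWm.aemeasurable
    (hBm.prodMk hJm).aemeasurable (by fun_prop) (by fun_prop),
    integral_exp_neg_mul_sub_max_of_indepFun hBm hJm hBnonneg hBJ hν hJlaw hs hc.1.le hc.2.le]
  ring

/-- For mutually independent nonnegative `W, B` and `J` exponential with
rate `ν > 0`, `a > 0` and `c ∈ (0,1)`, for every `s ≥ 0`:
`E[exp(-s·(a·W + B - max(c·B - J, 0)))]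
  = (ν/(ν+s))·Z(a·s)·φ_B(s·(1-c)) + (s/(ν+s))·Z(a·s)·φ_B(s + ν·c)`,
where `Z y = E[exp(-y·W)]` and `φ_B y = E[exp(-y·B)]`. -/
theorem lst_proportional_with_subtracting_delay
    {Ω : Type*} [MeasurableSpace Ω] (P : Measure Ω) [IsProbabilityMeasure P]
    (W B J : Ω → ℝ)
    (hWm : Measurable W) (hBm : Measurable B) (hJm : Measurable J)
    (hWnonneg : ∀ ω, 0 ≤ W ω) (hBnonneg : ∀ ω, 0 ≤ B ω)
    (ν : ℝ) (hν : 0 < ν)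
    (hJlaw : Measure.map J P = expMeasure ν)
    (hindep : iIndepFun ![W, B, J] P)
    (a : ℝ) (ha : 0 < a) (c : ℝ) (hc : c ∈ Set.Ioo (0 : ℝ) 1)
    (s : ℝ) (hs : 0 ≤ s) :
    ∫ ω, Real.exp (-s * (a * W ω + B ω - max (c * B ω - J ω) 0)) ∂P
      = (ν / (ν + s)) * (∫ ω, Real.exp (-(a * s) * W ω) ∂P)
          * (∫ ω, Real.exp (-(s * (1 - c)) * B ω) ∂P)
        + (s / (ν + s)) * (∫ ω, Real.exp (-(a * s) * W ω) ∂P)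
          * (∫ ω, Real.exp (-(s + ν * c) * B ω) ∂P) :=
  lst_proportional_with_subtracting_delay_general P W B J hWm hBm hJm hBnonneg ν hν hJlaw hindep a c
    hc s hs
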